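/- For all integers n, m ≥ 1, every red/blue coloring of the Boolean lattice Q_{mn+n+m} contains a red copy of Q_n or a blue copy of Q_m. Consequently R(Q_n, Q_m) ≤ mn + n + m. -/

import Mathlib

/-!
Split the ground set into `X` of size `n` and `n + 1` blocks `Y₀, …, Yₙ` of size `m`, and run
through the subsets `A ⊆ X` by strong induction. Let `U(A)` be the union of the `Y`-parts
already chosen for the proper subsets of `A`; it lies in the blocks below `Y_|A|`. If some
`S ⊆ Y_|A|` makes `A ∪ U(A) ∪ S` red, the `Y`-part of `A` is `U(A) ∪ S`. If this succeeds for
every `A`, the chosen sets form a red copy of `Q_n`, as the `Y`-parts grow along inclusion. If it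
fails at some `A`, then `S ↦ A ∪ U(A) ∪ S` for `S ⊆ Y_|A|` is a blue copy of `Q_m`, because
`U(A)` misses `Y_|A|`.
-/

/-- `f` is an embedding of the Boolean lattice `Q_n` into `Q_N`:
`A ⊆ B` iff `f A ⊆ f B` (this forces injectivity). -/
def IsCubeEmb {n N : ℕ} (f : Finset (Fin n) → Finset (Fin N)) : Prop :=
  ∀ A B : Finset (Fin n), A ⊆ B ↔ f A ⊆ f B

/-- Every red/blue coloring of `Q_N` (red = `true`, blue = `false`) contains a
red copy of `Q_n` or a blue copy of `Q_m`. -/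
def CubeRamseyProp (n m N : ℕ) : Prop :=
  ∀ c : Finset (Fin N) → Bool,
    (∃ f : Finset (Fin n) → Finset (Fin N), IsCubeEmb f ∧ ∀ A, c (f A) = true) ∨
    (∃ g : Finset (Fin m) → Finset (Fin N), IsCubeEmb g ∧ ∀ A, c (g A) = false)

/-- The poset Ramsey number `R(Q_n, Q_m)`. -/
noncomputable def posetRamsey (n m : ℕ) : ℕ := sInf {N | CubeRamseyProp n m N}

open Finset Function

def CubeRamsey (ι κ α : Type*) : Prop :=
  ∀ c : Finset α → Bool,
    (∃ f : Finset ι ↪o Finset α, ∀ A, c (f A) = true) ∨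
    (∃ g : Finset κ ↪o Finset α, ∀ S, c (g S) = false)

theorem CubeRamsey.of_equiv {ι κ α β : Type*} (h : CubeRamsey ι κ α) (e : α ≃ β) :
    CubeRamsey ι κ β := fun c =>
  let E := Finset.mapEmbedding e.toEmbedding
  (h (c ∘ E)).imp (fun ⟨f, hf⟩ => ⟨f.trans E, hf⟩) (fun ⟨g, hg⟩ => ⟨g.trans E, hg⟩)

theorem cubeRamseyProp_of_cubeRamsey {n m N : ℕ} (h : CubeRamsey (Fin n) (Fin m) (Fin N)) :
    CubeRamseyProp n m N := fun c =>
  (h c).imp (fun ⟨f, hf⟩ => ⟨f, fun _ _ => f.le_iff_le.symm, hf⟩)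
    (fun ⟨g, hg⟩ => ⟨g, fun _ _ => g.le_iff_le.symm, hg⟩)

theorem Finset.disjSum_subset_disjSum_iff {α β : Type*} {s₁ s₂ : Finset α}
    {t₁ t₂ : Finset β} :
    s₁.disjSum t₁ ⊆ s₂.disjSum t₂ ↔ s₁ ⊆ s₂ ∧ t₁ ⊆ t₂ :=
  Finset.sumEquiv.symm.le_iff_le (x := (s₁, t₁)) (y := (s₂, t₂))

namespace CubeRamsey

abbrev Blocks (ι κ : Type*) [Fintype ι] := Fin (Fintype.card ι + 1) × κ

variable {ι κ : Type*} [Fintype ι]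

def rank (A : Finset ι) : Fin (Fintype.card ι + 1) :=
  ⟨#A, Nat.lt_succ_of_le A.card_le_univ⟩

theorem rank_lt_rank {A B : Finset ι} (h : A ⊂ B) : rank A < rank B :=
  Fin.mk_lt_mk.2 (card_lt_card h)

variable [DecidableEq ι] [DecidableEq κ]

/-- The set `A ∪ U ∪ S` of the sketch, with `S ⊆ κ` placed in the block `Y_|A|`. -/
def layer (A : Finset ι) (U : Finset (Blocks ι κ)) (S : Finset κ) : Finset (ι ⊕ Blocks ι κ) :=
  A.disjSum (U ∪ S.map (.sectR (rank A) κ))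

variable (c : Finset (ι ⊕ Blocks ι κ) → Bool)

open Classical in
noncomputable def extension (A : Finset ι) (U : Finset (Blocks ι κ)) : Finset κ :=
  if h : ∃ S, c (layer A U S) = true then h.choose else ∅

/-- The `Y`-part chosen for `A`; `below c A` is `U(A)`. -/
noncomputable def greedy (A : Finset ι) : Finset (Blocks ι κ) :=
  let U := A.ssubsets.attach.sup fun B => greedy B.1
  U ∪ (extension c A U).map (.sectR (rank A) κ)
termination_by #A
decreasing_by exact card_lt_card (mem_ssubsets.1 B.2)

noncomputable def below (A : Finset ι) : Finset (Blocks ι κ) :=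
  A.ssubsets.sup (greedy c)

theorem greedy_eq (A : Finset ι) :
    greedy c A = below c A ∪ (extension c A (below c A)).map (.sectR (rank A) κ) := by
  rw [greedy, sup_attach]
  rfl

theorem disjSum_greedy (A : Finset ι) :
    A.disjSum (greedy c A) = layer A (below c A) (extension c A (below c A)) := by
  rw [greedy_eq, layer]

theorem greedy_subset_below {A B : Finset ι} (h : A ⊂ B) : greedy c A ⊆ below c B :=
  le_sup (f := greedy c) (mem_ssubsets.2 h)

theorem greedy_mono : Monotone (greedy c) := by
  intro A B h
  obtain h | rfl := h.ssubset_or_eq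
  · exact (greedy_subset_below c h).trans (greedy_eq c B ▸ subset_union_left)
  · exact subset_rfl

theorem fst_le_of_mem_greedy (A : Finset ι) : ∀ y ∈ greedy c A, y.1 ≤ rank A := by
  induction A using Finset.strongInduction with
  | H A ih =>
    intro y hy
    rcases mem_union.1 (greedy_eq c A ▸ hy) with hy | hy
    · obtain ⟨B, hB, hyB⟩ := mem_sup.1 hy
      have hBA := mem_ssubsets.1 hB
      exact (ih B hBA y hyB).trans (rank_lt_rank hBA).le
    · obtain ⟨k, -, rfl⟩ := mem_map.1 hy
      exact le_rfl

theorem fst_lt_of_mem_below {A : Finset ι} {y : Blocks ι κ} (hy : y ∈ below c A) :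
    y.1 < rank A := by
  obtain ⟨B, hB, hyB⟩ := mem_sup.1 hy
  exact (fst_le_of_mem_greedy c B y hyB).trans_lt (rank_lt_rank (mem_ssubsets.1 hB))

theorem layer_below_subset_layer_below_iff {A : Finset ι} {S T : Finset κ} :
    layer A (below c A) S ⊆ layer A (below c A) T ↔ S ⊆ T := by
  have hdisj : ∀ S : Finset κ, Disjoint (S.map (.sectR (rank A) κ)) (below c A) := by
    refine fun S => disjoint_left.2 fun y hy hyU => ?_
    obtain ⟨k, -, rfl⟩ := mem_map.1 hy
    exact lt_irrefl _ (fst_lt_of_mem_below c hyU)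
  rw [layer, layer, disjSum_subset_disjSum_iff, ← map_subset_map (f := .sectR (rank A) κ)]
  refine ⟨fun h => (hdisj S).left_le_of_le_sup_left (subset_union_right.trans h.2),
    fun h => ⟨subset_rfl, union_subset_union subset_rfl h⟩⟩

theorem exists_red_of_forall_exists
    (h : ∀ A, ∃ S, c (layer A (below c A) S) = true) :
    ∃ f : Finset ι ↪o Finset (ι ⊕ Blocks ι κ), ∀ A, c (f A) = true := by
  refine ⟨OrderEmbedding.ofMapLEIff (fun A => A.disjSum (greedy c A)) fun A B => ?_,
    fun A => ?_⟩
  · rw [disjSum_subset_disjSum_iff]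
    exact ⟨And.left, fun hAB => ⟨hAB, greedy_mono c hAB⟩⟩
  · change c (A.disjSum (greedy c A)) = true
    rw [disjSum_greedy, extension, dif_pos (h A)]
    exact (h A).choose_spec

theorem exists_blue_of_forall {A : Finset ι}
    (h : ∀ S, c (layer A (below c A) S) = false) :
    ∃ g : Finset κ ↪o Finset (ι ⊕ Blocks ι κ), ∀ S, c (g S) = false :=
  ⟨OrderEmbedding.ofMapLEIff (layer A (below c A))
    fun _ _ => layer_below_subset_layer_below_iff c, h⟩

end CubeRamsey

open CubeRamsey in
theorem cubeRamsey_sum_blocks (ι κ : Type*) [Fintype ι] [DecidableEq ι] [DecidableEq κ] :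
    CubeRamsey ι κ (ι ⊕ Blocks ι κ) := by
  intro c
  by_cases h : ∀ A, ∃ S, c (layer A (below c A) S) = true
  · exact .inl (exists_red_of_forall_exists c h)
  · simp only [not_forall, not_exists, Bool.not_eq_true] at h
    obtain ⟨A, hA⟩ := h
    exact .inr (exists_blue_of_forall c hA)

theorem RQnQm_upper_general (n m : ℕ) :
    (∀ c : Finset (Fin (m * n + n + m)) → Bool,
      (∃ f : Finset (Fin n) → Finset (Fin (m * n + n + m)), IsCubeEmb f ∧ ∀ A, c (f A) = true) ∨
      (∃ g : Finset (Fin m) → Finset (Fin (m * n + n + m)), IsCubeEmb g ∧ ∀ A, c (g A) = false)) ∧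
    posetRamsey n m ≤ m * n + n + m := by
  have hcard :
      Fintype.card (Fin n ⊕ CubeRamsey.Blocks (Fin n) (Fin m)) = m * n + n + m := by
    simp only [Fintype.card_sum, Fintype.card_prod, Fintype.card_fin]
    ring
  have h : CubeRamseyProp n m (m * n + n + m) := cubeRamseyProp_of_cubeRamsey
    ((cubeRamsey_sum_blocks _ _).of_equiv (Fintype.equivFinOfCardEq hcard))
  exact ⟨h, Nat.sInf_le h⟩

/-- Every red/blue coloring of `Q_{mn+n+m}` contains a red copy of `Q_n` or a
blue copy of `Q_m`; consequently `R(Q_n, Q_m) ≤ mn + n + m`. -/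
theorem RQnQm_upper (n m : ℕ) (hn : 1 ≤ n) (hm : 1 ≤ m) :
    (∀ c : Finset (Fin (m * n + n + m)) → Bool,
      (∃ f : Finset (Fin n) → Finset (Fin (m * n + n + m)), IsCubeEmb f ∧ ∀ A, c (f A) = true) ∨
      (∃ g : Finset (Fin m) → Finset (Fin (m * n + n + m)), IsCubeEmb g ∧ ∀ A, c (g A) = false)) ∧
    posetRamsey n m ≤ m * n + n + m :=
  RQnQm_upper_general n m
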